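/- Let α, e be epsilon numbers and let q, s be ordinals less than α⁺ (the least epsilon number greater than α) such that Ep(q) ∩ α ⊆ e and Ep(s) ∩ α ⊆ e (i.e., every epsilon number below α occurring in the Cantor normal forms of q or s is below e). Then q < s if and only if q[α := e] < s[α := e]. -/

import Mathlib

open Ordinal

def IsEps (x : Ordinal.{0}) : Prop := omega0 ^ x = x

noncomputable def nextEps (x : Ordinal.{0}) : Ordinal.{0} := sInf {e | IsEps e ∧ x < e}

inductive InEp : Ordinal.{0} → Ordinal.{0} → Prop
  | self (x : Ordinal.{0}) (h : omega0 ^ x = x) : InEp x x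
  | exp (x e c y : Ordinal.{0}) (h : omega0 ^ x ≠ x) (hm : (e, c) ∈ CNF omega0 x)
      (hy : InEp y e) : InEp y x

/-- The set of epsilon numbers appearing in the iterated Cantor normal form of `x`. -/
def Ep (x : Ordinal.{0}) : Set Ordinal.{0} := {y | InEp y x}

/-- Substitution of the epsilon number `α` by the epsilon number `e` in the
iterated Cantor normal form of `x`. -/
noncomputable def subst (α e : Ordinal.{0}) (x : Ordinal.{0}) : Ordinal.{0} :=
  if h : omega0 ^ x = x then (if x = α then e else x)
  else ((CNF omega0 x).attach.map (fun p => omega0 ^ (subst α e p.1.1) * p.1.2)).sum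
termination_by x
decreasing_by
  have hx0 : x ≠ 0 := by
    rintro rfl
    have := p.2
    simp [Ordinal.CNF.zero_right] at this
  have hle := Ordinal.CNF.fst_le_log p.2
  have hlt : Ordinal.log omega0 x < x := by
    have h1 : x < omega0 ^ x :=
      lt_of_le_of_ne (Ordinal.right_le_opow x one_lt_omega0) (Ne.symm h)
    exact (Ordinal.lt_opow_iff_log_lt one_lt_omega0 hx0).mp h1
  exact lt_of_le_of_lt hle hlt

/-!
In Cantor normal form `x = ω ^ a * c + r` (`a = log ω x`, `0 < c < ω`, `r < ω ^ a`) the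
substitution acts termwise: `x[α := e] = ω ^ a[α := e] * c + r[α := e]`. Monotonicity is proved by
induction on `s` together with the bound `q < ω ^ s → q[α := e] < ω ^ s[α := e]`, which controls the
lower-order terms when leading terms are compared. The hypotheses on `q` and `s` enter only when `s`
is an epsilon number, hence `s ≤ α` as `s < α⁺`: if `s < α` the substitution fixes every `q < s`,
and if `s = α` all epsilon numbers of `q` lie below `e`, so `q[α := e] < e`.
-/

section Subst

variable {α e x : Ordinal.{0}}

theorem IsEps.ne_zero (h : IsEps x) : x ≠ 0 := by
  rintro rfl
  simp [IsEps] at h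

theorem IsEps.CNF_eq (h : IsEps x) : CNF ω x = [(x, 1)] := by
  have hlog : log ω x = x := by
    conv_lhs => rw [← h]
    exact log_opow one_lt_omega0 x
  rw [CNF.ne_zero h.ne_zero, hlog, h, Ordinal.div_self h.ne_zero, Ordinal.mod_self,
    CNF.zero_right]

theorem subst_of_isEps (h : IsEps x) : subst α e x = if x = α then e else x := by
  rw [subst, dif_pos (show ω ^ x = x from h)]

theorem subst_zero : subst α e 0 = 0 := by
  rw [subst, dif_neg (by simp), CNF.zero_right]
  rfl

theorem sum_map_CNF_subst (he : IsEps e) (x : Ordinal.{0}) :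
    ((CNF ω x).map fun p => ω ^ subst α e p.1 * p.2).sum = subst α e x := by
  by_cases h : IsEps x
  · simp only [h.CNF_eq, List.map_cons, List.map_nil, List.sum_cons, List.sum_nil, add_zero,
      mul_one]
    rw [subst_of_isEps h]
    split_ifs
    exacts [he, h]
  · rw [subst, dif_neg (show ¬ω ^ x = x from h), ← List.attach_map_val (l := CNF ω x)]

/-- This holds for epsilon numbers `x` too (`log ω x = x`, `c = 1`, `r = 0`), because `x[α := e]`
is again an epsilon number. -/
theorem subst_eq_opow_mul_add (he : IsEps e) (hx : x ≠ 0) :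
    subst α e x = ω ^ subst α e (log ω x) * (x / ω ^ log ω x) + subst α e (x % ω ^ log ω x) := by
  rw [← sum_map_CNF_subst he x, CNF.ne_zero hx, List.map_cons, List.sum_cons,
    sum_map_CNF_subst he]

theorem le_of_mem_Ep {y : Ordinal.{0}} (h : y ∈ Ep x) : y ≤ x := by
  induction h with
  | self => exact le_rfl
  | exp x a c y _ hm _ ih => exact ih.trans ((CNF.fst_le_log hm).trans (log_le_self _ _))

theorem mem_Ep_iff {y : Ordinal.{0}} : y ∈ Ep x ↔ ∃ a c, (a, c) ∈ CNF ω x ∧ y ∈ Ep a := by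
  constructor
  · rintro (⟨_, h⟩ | ⟨_, a, c, _, _, hm, hy⟩)
    · exact ⟨x, 1, by simp [IsEps.CNF_eq h], InEp.self x h⟩
    · exact ⟨a, c, hm, hy⟩
  · rintro ⟨a, c, hm, hy⟩
    by_cases h : IsEps x
    · obtain ⟨rfl, -⟩ : a = x ∧ c = 1 := by simpa [h.CNF_eq] using hm
      exact hy
    · exact InEp.exp x a c y h hm hy

theorem Ep_log_subset (hx : x ≠ 0) : Ep (log ω x) ⊆ Ep x := fun _ hy =>
  mem_Ep_iff.2 ⟨_, _, by rw [CNF.ne_zero hx]; exact List.mem_cons_self, hy⟩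

theorem Ep_mod_opow_log_subset (hx : x ≠ 0) : Ep (x % ω ^ log ω x) ⊆ Ep x := fun _ hy => by
  obtain ⟨a, c, hm, hy⟩ := mem_Ep_iff.1 hy
  exact mem_Ep_iff.2 ⟨a, c, by rw [CNF.ne_zero hx]; exact List.mem_cons_of_mem _ hm, hy⟩

theorem IsEps.le_of_lt_nextEps (hx : IsEps x) (h : x < nextEps α) : x ≤ α :=
  not_lt.1 fun hαx => (csInf_le' ⟨hx, hαx⟩ : nextEps α ≤ x).not_gt h

theorem log_lt_self_of_not_isEps (hx : ¬IsEps x) (hx0 : x ≠ 0) : log ω x < x :=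
  (lt_opow_iff_log_lt one_lt_omega0 hx0).1 ((right_le_opow x one_lt_omega0).lt_of_ne' hx)

theorem subst_eq_self (he : IsEps e) (hx : α ∉ Ep x) : subst α e x = x := by
  induction x using WellFoundedLT.induction with
  | ind x ih =>
    rcases eq_or_ne x 0 with rfl | hx0
    · exact subst_zero
    by_cases hxe : IsEps x
    · rw [subst_of_isEps hxe, if_neg]
      rintro rfl
      exact hx (InEp.self _ hxe)
    · rw [subst_eq_opow_mul_add he hx0,
        ih _ (log_lt_self_of_not_isEps hxe hx0) fun h => hx (Ep_log_subset hx0 h),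
        ih _ (mod_opow_log_lt_self ω hx0) fun h => hx (Ep_mod_opow_log_subset hx0 h),
        div_add_mod]

def substDomain (α e : Ordinal.{0}) : Set Ordinal.{0} :=
  {x | x < nextEps α ∧ Ep x ∩ Set.Iio α ⊆ Set.Iio e}

theorem log_mem_substDomain (hx : x ∈ substDomain α e) (hx0 : x ≠ 0) :
    log ω x ∈ substDomain α e :=
  ⟨(log_le_self _ _).trans_lt hx.1, fun _ hy => hx.2 ⟨Ep_log_subset hx0 hy.1, hy.2⟩⟩

theorem mod_opow_log_mem_substDomain (hx : x ∈ substDomain α e) (hx0 : x ≠ 0) :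
    x % ω ^ log ω x ∈ substDomain α e :=
  ⟨(mod_le _ _).trans_lt hx.1, fun _ hy => hx.2 ⟨Ep_mod_opow_log_subset hx0 hy.1, hy.2⟩⟩

theorem subst_lt_of_lt (he : IsEps e) (hxα : x < α) (hxe : Ep x ∩ Set.Iio α ⊆ Set.Iio e) :
    subst α e x < e := by
  induction x using WellFoundedLT.induction with
  | ind x ih =>
    rcases eq_or_ne x 0 with rfl | hx0
    · rw [subst_zero]
      exact pos_iff_ne_zero.2 he.ne_zero
    by_cases hxε : IsEps x
    · rw [subst_of_isEps hxε, if_neg hxα.ne]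
      exact hxe ⟨InEp.self x hxε, hxα⟩
    have hlog : log ω x < x := log_lt_self_of_not_isEps hxε hx0
    have hmod : x % ω ^ log ω x < x := mod_opow_log_lt_self ω hx0
    have hlog_lt := ih _ hlog (hlog.trans hxα) fun _ hy => hxe ⟨Ep_log_subset hx0 hy.1, hy.2⟩
    have hmod_lt := ih _ hmod (hmod.trans hxα) fun _ hy =>
      hxe ⟨Ep_mod_opow_log_subset hx0 hy.1, hy.2⟩
    have he_add : IsPrincipal (· + ·) e := he ▸ isPrincipal_add_omega0_opow e
    rw [subst_eq_opow_mul_add he hx0]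
    exact he_add ((opow_mul_lt_opow (div_opow_log_lt x one_lt_omega0) hlog_lt).trans_eq he)
      hmod_lt

theorem subst_lt_subst_of_isEps {q s : Ordinal.{0}} (he : IsEps e) (hsε : IsEps s)
    (hs : s < nextEps α) (hqe : Ep q ∩ Set.Iio α ⊆ Set.Iio e) (hqs : q < s) :
    subst α e q < subst α e s := by
  rw [subst_of_isEps hsε]
  split_ifs with hsα
  · exact subst_lt_of_lt he (hsα ▸ hqs) hqe
  · have hqα : q < α := hqs.trans_le ((hsε.le_of_lt_nextEps hs).lt_of_ne hsα |>.le)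
    rwa [subst_eq_self he fun h => (le_of_mem_Ep h).not_gt hqα]

theorem subst_lt_subst_of_not_isEps {q s : Ordinal.{0}} (he : IsEps e) (hsε : ¬IsEps s)
    (hs : s ∈ substDomain α e)
    (ih : ∀ b < s, b ∈ substDomain α e → ∀ q ∈ substDomain α e,
      (q < b → subst α e q < subst α e b) ∧ (q < ω ^ b → subst α e q < ω ^ subst α e b))
    (hq : q ∈ substDomain α e) (hqs : q < s) : subst α e q < subst α e s := by
  have hs0 : s ≠ 0 := (zero_le.trans_lt hqs).ne'
  have hb : log ω s < s := log_lt_self_of_not_isEps hsε hs0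
  have hbD := log_mem_substDomain hs hs0
  rcases lt_or_ge q (ω ^ log ω s) with hqb | hqb
  · calc subst α e q < ω ^ subst α e (log ω s) := (ih _ hb hbD q hq).2 hqb
      _ ≤ ω ^ subst α e (log ω s) * (s / ω ^ log ω s) := le_mul_left _ (div_opow_log_pos ω hs0)
      _ ≤ subst α e s := (subst_eq_opow_mul_add he hs0).symm ▸ le_self_add
  have hq0 : q ≠ 0 := ((opow_pos _ omega0_pos).trans_le hqb).ne'
  have hlog : log ω q = log ω s := (log_eq_iff one_lt_omega0 hq0 _).2
    ⟨hqb, hqs.trans (lt_opow_succ_log_self one_lt_omega0 s)⟩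
  have hrD := mod_opow_log_mem_substDomain hq hq0
  rw [hlog] at hrD
  rw [subst_eq_opow_mul_add he hq0, subst_eq_opow_mul_add he hs0, hlog]
  rcases (div_le_left hqs.le (ω ^ log ω s)).lt_or_eq with hc | hc
  · have hr := (ih _ hb hbD _ hrD).2 (mod_lt _ (opow_ne_zero _ omega0_ne_zero))
    exact (opow_mul_add_lt_opow_mul hr hc).trans_le le_self_add
  · have hr : q % ω ^ log ω s < s % ω ^ log ω s := by
      refine (add_lt_add_iff_left (ω ^ log ω s * (s / ω ^ log ω s))).1 ?_
      calc _ = q := by rw [← hc, div_add_mod]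
        _ < s := hqs
        _ = _ := (div_add_mod _ _).symm
    rw [hc, add_lt_add_iff_left]
    exact (ih _ (mod_opow_log_lt_self ω hs0) (mod_opow_log_mem_substDomain hs hs0) _ hrD).1 hr

theorem subst_lt_opow_subst {q s : Ordinal.{0}} (he : IsEps e)
    (hmono : ∀ q ∈ substDomain α e, q < s → subst α e q < subst α e s)
    (ih : ∀ b < s, b ∈ substDomain α e → ∀ q ∈ substDomain α e,
      q < ω ^ b → subst α e q < ω ^ subst α e b)
    (hq : q ∈ substDomain α e) (hqs : q < ω ^ s) : subst α e q < ω ^ subst α e s := by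
  rcases eq_or_ne q 0 with rfl | hq0
  · rw [subst_zero]
    exact opow_pos _ omega0_pos
  have hlog : log ω q < s := (lt_opow_iff_log_lt one_lt_omega0 hq0).1 hqs
  have hlog_mem := log_mem_substDomain hq hq0
  rw [subst_eq_opow_mul_add he hq0]
  exact opow_mul_add_lt_opow (div_opow_log_lt q one_lt_omega0)
    (ih _ hlog hlog_mem _ (mod_opow_log_mem_substDomain hq hq0)
      (mod_lt _ (opow_ne_zero _ omega0_ne_zero)))
    (hmono _ hlog_mem hlog)

theorem strictMonoOn_subst (he : IsEps e) : StrictMonoOn (subst α e) (substDomain α e) := by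
  suffices H : ∀ s ∈ substDomain α e, ∀ q ∈ substDomain α e,
      (q < s → subst α e q < subst α e s) ∧ (q < ω ^ s → subst α e q < ω ^ subst α e s) from
    fun q hq s hs hqs => (H s hs q hq).1 hqs
  intro s
  induction s using WellFoundedLT.induction with
  | ind s ih =>
    intro hs
    have hmono : ∀ q ∈ substDomain α e, q < s → subst α e q < subst α e s := by
      intro q hq hqs
      by_cases hsε : IsEps s
      · exact subst_lt_subst_of_isEps he hsε hs.1 hq.2 hqs
      · exact subst_lt_subst_of_not_isEps he hsε hs ih hq hqs
    exact fun q hq => ⟨hmono q hq, subst_lt_opow_subst he hmono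
      (fun b hb hbD q hq => (ih b hb hbD q hq).2) hq⟩

end Subst

theorem subst_lt_iff_lt_general (α e q s : Ordinal.{0}) (he : IsEps e)
    (hq : q < nextEps α) (hs : s < nextEps α)
    (hqe : Ep q ∩ Set.Iio α ⊆ Set.Iio e) (hse : Ep s ∩ Set.Iio α ⊆ Set.Iio e) :
    q < s ↔ subst α e q < subst α e s :=
  ((strictMonoOn_subst he).lt_iff_lt ⟨hq, hqe⟩ ⟨hs, hse⟩).symm

/-- The substitution x ↦ x[α := e] preserves the order on ordinals q, s < α⁺
all of whose epsilon numbers below α are below e. -/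
theorem subst_lt_iff_lt (α e q s : Ordinal.{0}) (hα : IsEps α) (he : IsEps e)
    (hq : q < nextEps α) (hs : s < nextEps α)
    (hqe : Ep q ∩ Set.Iio α ⊆ Set.Iio e) (hse : Ep s ∩ Set.Iio α ⊆ Set.Iio e) :
    q < s ↔ subst α e q < subst α e s :=
  subst_lt_iff_lt_general α e q s he hq hs hqe hse
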